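/- Let (α,u) be a bypass in Q. Then exactly one of the following holds: either φ_{α,u,τ}(I_0) = I_0 for every τ ∈ k, or φ_{α,u,τ}(I_0) ≠ I_0 for every τ ∈ k^*. -/

import Mathlib

attribute [local instance] Classical.propDecidable

/-- A quiver given by a set of vertices, a set of arrows and source/target maps. -/
structure Quiv where
  V : Type
  A : Type
  s : A → V
  t : A → V

namespace Quiv

section Basic

variable (Q : Quiv)

/-- A (nontrivial) path is a nonempty list of composable arrows, listed in the
order they are traversed. -/
def IsPath (p : List Q.A) : Prop :=
  p ≠ [] ∧ p.Chain' (fun a b => Q.t a = Q.s b)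

/-- Source of a nonempty list of arrows. -/
def src (p : List Q.A) : Option Q.V := p.head?.map Q.s

/-- Target of a nonempty list of arrows. -/
def tgt (p : List Q.A) : Option Q.V := p.getLast?.map Q.t

/-- `Q` has no oriented cycle: no nontrivial path has equal source and target. -/
def NoCycle : Prop := ∀ p, Q.IsPath p → Q.src p ≠ Q.tgt p

/-- `Q` has no multiple arrows: distinct arrows never have both the same source
and the same target. -/
def NoMultipleArrows : Prop :=
  ∀ a b : Q.A, Q.s a = Q.s b → Q.t a = Q.t b → a = b

/-- A bypass `(α, u)`: `u` is a path parallel to the arrow `α` and distinct from it. -/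
def IsBypass (α : Q.A) (u : List Q.A) : Prop :=
  Q.IsPath u ∧ Q.src u = some (Q.s α) ∧ Q.tgt u = some (Q.t α) ∧ u ≠ [α]

/-- `Repl n u v` : `v` is obtained from `u` by replacing `n` of its arrows (at
increasing positions) by bypass paths. -/
inductive Repl : ℕ → List Q.A → List Q.A → Prop
  | nil : Repl 0 [] []
  | keep (a : Q.A) {n : ℕ} {u v : List Q.A} : Repl n u v → Repl n (a :: u) (a :: v)
  | repl {a : Q.A} {p : List Q.A} {n : ℕ} {u v : List Q.A} :
      Q.IsBypass a p → Repl n u v → Repl (n + 1) (a :: u) (p ++ v)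

/-- `v` is derived of `u` of order `t`. -/
def DerivedOfOrder (t : ℕ) (u v : List Q.A) : Prop := 1 ≤ t ∧ Q.Repl t u v

/-- `v` is derived of `u` (of some order `t ≥ 1`). -/
def Derived (u v : List Q.A) : Prop := ∃ t, Q.DerivedOfOrder t u v

/-- `W(α)` : the number of bypasses of the form `(α, u)`. -/
noncomputable def Wa (α : Q.A) : ℕ := Nat.card {u : List Q.A // Q.IsBypass α u}

/-- `W(u)` for a path `u = α_n ⋯ α_1` : the sum of the `W(α_i)`. -/
noncomputable def Wp (u : List Q.A) : ℕ := (u.map Q.Wa).sum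

/-- A linear order `<` on the nontrivial paths of `Q` refining the `W`-ordering and
compatible with concatenation, as in Le Meur's Definition 2.5. -/
structure PathOrder where
  lt : List Q.A → List Q.A → Prop
  irrefl : ∀ p, Q.IsPath p → ¬ lt p p
  trans' : ∀ p q r, lt p q → lt q r → lt p r
  total' : ∀ p q, Q.IsPath p → Q.IsPath q → p ≠ q → lt p q ∨ lt q p
  wlt : ∀ p q, Q.IsPath p → Q.IsPath q → Q.Wp p < Q.Wp q → lt p q
  concat : ∀ u u' v v' : List Q.A, lt v u → lt v' u' →
    Q.IsPath (v ++ v') → Q.IsPath (u ++ u') → lt (v ++ v') (u ++ u')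

end Basic

/-- Lexicographic (strict) order on bypasses: `(α,u) < (β,v)` iff `α < β`, or
`α = β` and `u < v`. -/
def PathOrder.bplt {Q : Quiv} (o : Q.PathOrder) (b c : Q.A × List Q.A) : Prop :=
  o.lt [b.1] [c.1] ∨ (b.1 = c.1 ∧ o.lt b.2 c.2)

/-- Lexicographic non-strict order on bypasses. -/
def PathOrder.bple {Q : Quiv} (o : Q.PathOrder) (b c : Q.A × List Q.A) : Prop :=
  o.bplt b c ∨ b = c

section Linear

variable (Q : Quiv) (k : Type) [Field k]

/-- Concatenation product on the free `k`-module on lists of arrows (the morphism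
spaces of the path category `kQ`). -/
noncomputable def mulF (f g : List Q.A →₀ k) : List Q.A →₀ k :=
  f.sum fun p c => g.sum fun q d => Finsupp.single (p ++ q) (c * d)

/-- Image of the arrow `a` under the transvection `φ_{α,u,τ}`. -/
noncomputable def arrowImg (α : Q.A) (u : List Q.A) (τ : k) (a : Q.A) : List Q.A →₀ k :=
  if a = α then Finsupp.single [a] 1 + τ • Finsupp.single u 1 else Finsupp.single [a] 1

/-- Image of a path under the transvection `φ_{α,u,τ}`. -/
noncomputable def substPoly (α : Q.A) (u : List Q.A) (τ : k) : List Q.A → (List Q.A →₀ k)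
  | [] => Finsupp.single [] 1
  | a :: rest => mulF Q k (arrowImg Q k α u τ a) (substPoly α u τ rest)

/-- The transvection `φ_{α,u,τ}` as a linear endomorphism of `kQ` : it is the
`k`-linear automorphism of `kQ` fixing every vertex, sending `α` to `α + τ u`, and
fixing every other arrow. -/
noncomputable def substMap (α : Q.A) (u : List Q.A) (τ : k) :
    Module.End k (List Q.A →₀ k) :=
  Finsupp.linearCombination k (substPoly Q k α u τ)

/-- `ψ` lies in the group `T` generated by the transvections, i.e. it is a finite
product of transvections. -/
def MemT (ψ : Module.End k (List Q.A →₀ k)) : Prop :=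
  ∃ L : List (Q.A × List Q.A × k),
    (∀ x ∈ L, Q.IsBypass x.1 x.2.1) ∧
    ψ = (L.map fun x => substMap Q k x.1 x.2.1 x.2.2).prod

/-- `r'` is a subexpression of `r`. -/
def Subexpr (r' r : List Q.A →₀ k) : Prop :=
  r'.support ⊆ r.support ∧ ∀ p ∈ r'.support, r' p = r p

/-- A minimal relation of `I` : a nonzero `r ∈ I` such that `0` and `r` are the only
subexpressions of `r` lying in `I`. -/
def IsMinimalRel (I : Submodule k (List Q.A →₀ k)) (r : List Q.A →₀ k) : Prop :=
  r ∈ I ∧ r ≠ 0 ∧ ∀ r', Subexpr Q k r' r → r' ∈ I → r' = 0 ∨ r' = r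

/-- `ReplExp g u v c` : `v` is obtained from the path `u` by replacing some of its
arrows `a` (at increasing positions) by paths `w ∈ supp(g a)`, `w ≠ a`, and `c` is
the product of the corresponding coefficients `w^*(g a)`. -/
inductive ReplExp (g : Q.A → (List Q.A →₀ k)) : List Q.A → List Q.A → k → Prop
  | nil : ReplExp g [] [] 1
  | keep (a : Q.A) {u v : List Q.A} {c : k} :
      ReplExp g u v c → ReplExp g (a :: u) (a :: v) c
  | repl (a : Q.A) {w u v : List Q.A} {c : k} :
      w ∈ (g a).support → w ≠ [a] → ReplExp g u v c →
      ReplExp g (a :: u) (w ++ v) ((g a) w * c)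

/-- The homotopy relation `∼_I` on walks. A walk is a list of pairs `(a, d)` where
`a` is an arrow and `d` is `true` for `a` and `false` for the formal inverse `a⁻¹`;
the relation is the smallest equivalence relation compatible with concatenation,
cancelling `a a⁻¹` and `a⁻¹ a`, and identifying any two paths lying in the support
of a minimal relation of `I`. -/
inductive Homotopic (I : Submodule k (List Q.A →₀ k)) :
    List (Q.A × Bool) → List (Q.A × Bool) → Prop
  | refl (w : List (Q.A × Bool)) : Homotopic I w w
  | symm {w w' : List (Q.A × Bool)} : Homotopic I w w' → Homotopic I w' w
  | trans {w w' w'' : List (Q.A × Bool)} :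
      Homotopic I w w' → Homotopic I w' w'' → Homotopic I w w''
  | cancel (a : Q.A) : Homotopic I [(a, true), (a, false)] []
  | cancel' (a : Q.A) : Homotopic I [(a, false), (a, true)] []
  | rel {r : List Q.A →₀ k} (hr : IsMinimalRel Q k I r) {u v : List Q.A}
      (hu : u ∈ r.support) (hv : v ∈ r.support) :
      Homotopic I (u.map fun a => (a, true)) (v.map fun a => (a, true))
  | congr (w x : List (Q.A × Bool)) {v v' : List (Q.A × Bool)} :
      Homotopic I v v' → Homotopic I (w ++ v ++ x) (w ++ v' ++ x)

/-- `I` is a monomial admissible ideal of `kQ` : every element is a combination of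
paths of length `≥ 2`, membership is detected on supports (monomiality), and `I`
is stable under concatenation with paths on either side. -/
def IsMonomialAdmissible (I : Submodule k (List Q.A →₀ k)) : Prop :=
  (∀ r ∈ I, ∀ p ∈ (r : List Q.A →₀ k).support, Q.IsPath p ∧ 2 ≤ p.length) ∧
  (∀ r : List Q.A →₀ k, (∀ p ∈ r.support, Finsupp.single p (1 : k) ∈ I) → r ∈ I) ∧
  (∀ r ∈ I, ∀ p ∈ (r : List Q.A →₀ k).support, Finsupp.single p (1 : k) ∈ I) ∧
  (∀ p q : List Q.A, Q.IsPath p → Finsupp.single q (1 : k) ∈ I → Q.IsPath (p ++ q) →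
    Finsupp.single (p ++ q) (1 : k) ∈ I) ∧
  (∀ p q : List Q.A, Finsupp.single p (1 : k) ∈ I → Q.IsPath q → Q.IsPath (p ++ q) →
    Finsupp.single (p ++ q) (1 : k) ∈ I)

/-- A `k`-linear automorphism of `kQ` (fixing the vertices) is the transvection
`φ_{α,u,τ}` when its underlying linear map is `substMap α u τ`. -/
def IsTransvectionE (ψ : (List Q.A →₀ k) ≃ₗ[k] (List Q.A →₀ k))
    (α : Q.A) (u : List Q.A) (τ : k) : Prop :=
  (ψ : (List Q.A →₀ k) →ₗ[k] (List Q.A →₀ k)) = substMap Q k α u τ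

/-- The subgroup `T_{<(α,u)}` generated by the transvections `φ_{β,v,τ}` with
`(β,v) < (α,u)`. -/
noncomputable def TltSub (o : Q.PathOrder) (b : Q.A × List Q.A) :
    Subgroup ((List Q.A →₀ k) ≃ₗ[k] (List Q.A →₀ k)) :=
  Subgroup.closure
    {ψ | ∃ β v τ, Q.IsBypass β v ∧ o.bplt (β, v) b ∧ IsTransvectionE Q k ψ β v τ}

/-- The subgroup `T_{≤(α,u)}` generated by the transvections `φ_{β,v,τ}` with
`(β,v) ≤ (α,u)`. -/
noncomputable def TleSub (o : Q.PathOrder) (b : Q.A × List Q.A) :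
    Subgroup ((List Q.A →₀ k) ≃ₗ[k] (List Q.A →₀ k)) :=
  Subgroup.closure
    {ψ | ∃ β v τ, Q.IsBypass β v ∧ o.bple (β, v) b ∧ IsTransvectionE Q k ψ β v τ}

/-- The set `T_{(α,u)} = {φ_{α,u,τ} | τ ∈ k}`. -/
def TsingleSet (b : Q.A × List Q.A) :
    Set ((List Q.A →₀ k) ≃ₗ[k] (List Q.A →₀ k)) :=
  {ψ | ∃ τ : k, IsTransvectionE Q k ψ b.1 b.2 τ}

/-- `m` is the `<`-maximum of the support of `r`. -/
def IsMaxPath (o : Q.PathOrder) (r : List Q.A →₀ k) (m : List Q.A) : Prop :=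
  m ∈ r.support ∧ ∀ p ∈ r.support, p ≠ m → o.lt p m

/-- `B` is the Gröbner basis of the subspace `F` with respect to the path order `o` :
`B` spans `F` and each `r ∈ B` has a leading path `m` (with coefficient `1`, all other
paths of `supp r` being `<`-smaller) whose coefficient in every other element of `B`
vanishes. -/
def IsGB (o : Q.PathOrder) (F : Submodule k (List Q.A →₀ k))
    (B : Set (List Q.A →₀ k)) : Prop :=
  B ⊆ (F : Set (List Q.A →₀ k)) ∧ Submodule.span k B = F ∧
  ∀ r ∈ B, ∃ m, m ∈ (r : List Q.A →₀ k).support ∧ r m = 1 ∧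
    (∀ p ∈ (r : List Q.A →₀ k).support, p ≠ m → o.lt p m) ∧
    ∀ r' ∈ B, r' ≠ r → (r' : List Q.A →₀ k) m = 0

end Linear

/-!
Since `Q` has no oriented cycle, a path passes through the arrow `α` at most once and
`u` avoids it. Hence `φ_{α,u,τ}` fixes the paths avoiding `α` and sends a path
`p₁ α p₂` to `p₁ α p₂ + τ p₁ u p₂`. For the monomial ideal `I₀` and `τ ≠ 0` this shows
that `φ_{α,u,τ}(I₀) = I₀` exactly when `I₀` is closed under replacing `α` by `u` inside
its paths, a condition that does not depend on `τ`.
-/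

section Paths

variable {Q : Quiv}

lemma src_append {l₁ : List Q.A} (h : l₁ ≠ []) (l₂ : List Q.A) :
    Q.src (l₁ ++ l₂) = Q.src l₁ := by
  simp [src, List.head?_append_of_ne_nil _ h]

lemma tgt_append (l₁ : List Q.A) {l₂ : List Q.A} (h : l₂ ≠ []) :
    Q.tgt (l₁ ++ l₂) = Q.tgt l₂ := by
  simp [tgt, List.getLast?_append_of_ne_nil _ h]

lemma IsPath.infix {p l : List Q.A} (hp : Q.IsPath p) (hl : l <:+: p) (hne : l ≠ []) :
    Q.IsPath l :=
  ⟨hne, hp.2.infix hl⟩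

lemma IsPath.tgt_eq_src {l₁ l₂ : List Q.A} (hp : Q.IsPath (l₁ ++ l₂)) (h₁ : l₁ ≠ [])
    (h₂ : l₂ ≠ []) : Q.tgt l₁ = Q.src l₂ := by
  have hx := List.getLast?_eq_some_getLast h₁
  have hy := List.head?_eq_some_head h₂
  have hxy := (List.isChain_append.mp hp.2).2.2 _ hx _ hy
  simp [tgt, src, hx, hy, hxy]

lemma NoCycle.notMem_of_isPath_append_cons (hnc : Q.NoCycle) {p₁ p₂ : List Q.A} {α : Q.A}
    (hp : Q.IsPath (p₁ ++ α :: p₂)) : α ∉ p₂ := by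
  intro hα
  obtain ⟨q₁, q₂, rfl⟩ := List.append_of_mem hα
  have hloop : Q.IsPath ((α :: q₁) ++ (α :: q₂)) := hp.infix ⟨p₁, [], by simp⟩ (by simp)
  apply hnc (α :: q₁) (hloop.infix (List.prefix_append _ _).isInfix (by simp))
  rw [hloop.tgt_eq_src (by simp) (by simp)]
  rfl

lemma NoCycle.exists_eq_append_cons (hnc : Q.NoCycle) {p : List Q.A} (hp : Q.IsPath p)
    {α : Q.A} (hα : α ∈ p) : ∃ p₁ p₂, p = p₁ ++ α :: p₂ ∧ α ∉ p₁ ∧ α ∉ p₂ := by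
  obtain ⟨p₁, p₂, rfl⟩ := List.append_of_mem hα
  refine ⟨p₁, p₂, rfl, fun hα₁ => ?_, hnc.notMem_of_isPath_append_cons hp⟩
  obtain ⟨r₁, r₂, rfl⟩ := List.append_of_mem hα₁
  simp only [List.append_assoc, List.cons_append] at hp
  exact hnc.notMem_of_isPath_append_cons hp (by simp)

lemma NoCycle.notMem_of_isBypass (hnc : Q.NoCycle) {α : Q.A} {u : List Q.A}
    (h : Q.IsBypass α u) : α ∉ u := by
  obtain ⟨hu, hsrc, htgt, hne⟩ := h
  intro hα
  obtain ⟨q₁, q₂, rfl⟩ := List.append_of_mem hα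
  by_cases hq₁ : q₁ = []
  · subst hq₁
    have hq₂ : q₂ ≠ [] := by rintro rfl; exact hne rfl
    apply hnc q₂ (hu.infix ⟨[α], [], by simp⟩ hq₂)
    rw [← hu.tgt_eq_src (l₁ := [α]) (by simp) hq₂, ← tgt_append [α] hq₂]
    exact htgt.symm
  · apply hnc q₁ (hu.infix (List.prefix_append _ _).isInfix hq₁)
    rw [hu.tgt_eq_src hq₁ (by simp), ← src_append hq₁ (α :: q₂), hsrc]
    rfl

end Paths

section Transvection

variable {Q : Quiv} {k : Type} [Field k]

lemma mulF_single_single (p q : List Q.A) (c d : k) :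
    mulF Q k (Finsupp.single p c) (Finsupp.single q d) = Finsupp.single (p ++ q) (c * d) := by
  unfold mulF
  rw [Finsupp.sum_single_index (by simp), Finsupp.sum_single_index (by simp)]

lemma mulF_add_right (f g h : List Q.A →₀ k) :
    mulF Q k f (g + h) = mulF Q k f g + mulF Q k f h := by
  unfold mulF
  rw [← Finsupp.sum_add]
  refine Finsupp.sum_congr fun p _ => ?_
  exact Finsupp.sum_add_index' (by simp) (by intros; simp [mul_add, Finsupp.single_add])

lemma mulF_add_left (f g h : List Q.A →₀ k) :
    mulF Q k (f + g) h = mulF Q k f h + mulF Q k g h := by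
  unfold mulF
  refine Finsupp.sum_add_index' (by simp) fun _ _ _ => ?_
  rw [← Finsupp.sum_add]
  exact Finsupp.sum_congr fun _ _ => by simp [add_mul, Finsupp.single_add]

lemma substPoly_of_notMem (α : Q.A) (u : List Q.A) (τ : k) {p : List Q.A} (hp : α ∉ p) :
    substPoly Q k α u τ p = Finsupp.single p 1 := by
  induction p with
  | nil => rfl
  | cons a rest ih =>
    rw [List.mem_cons, not_or] at hp
    rw [substPoly, arrowImg, if_neg (Ne.symm hp.1), ih hp.2, mulF_single_single, one_mul,
      List.singleton_append]

lemma substPoly_append_cons (α : Q.A) (u : List Q.A) (τ : k) {p₁ p₂ : List Q.A}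
    (h₁ : α ∉ p₁) (h₂ : α ∉ p₂) :
    substPoly Q k α u τ (p₁ ++ α :: p₂) =
      Finsupp.single (p₁ ++ α :: p₂) 1 + τ • Finsupp.single (p₁ ++ u ++ p₂) 1 := by
  induction p₁ with
  | nil =>
    rw [List.nil_append, substPoly, arrowImg, if_pos rfl, substPoly_of_notMem α u τ h₂,
      mulF_add_left, Finsupp.smul_single', Finsupp.smul_single', mulF_single_single,
      mulF_single_single]
    simp
  | cons a p₁ ih =>
    rw [List.mem_cons, not_or] at h₁
    rw [List.cons_append, substPoly, arrowImg, if_neg (Ne.symm h₁.1), ih h₁.2,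
      mulF_add_right, Finsupp.smul_single', Finsupp.smul_single', mulF_single_single,
      mulF_single_single]
    simp

lemma substMap_single (α : Q.A) (u : List Q.A) (τ : k) (p : List Q.A) :
    substMap Q k α u τ (Finsupp.single p 1) = substPoly Q k α u τ p := by
  simp [substMap, Finsupp.linearCombination_single]

end Transvection

section Ideal

variable {Q : Quiv} {k : Type} [Field k]

lemma le_of_forall_single_mem {I N : Submodule k (List Q.A →₀ k)}
    (h : ∀ r ∈ I, ∀ p ∈ r.support, Finsupp.single p (1 : k) ∈ N) : I ≤ N := by
  intro r hr
  rw [← Finsupp.sum_single r]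
  refine Submodule.sum_mem _ fun p hp => ?_
  rw [← mul_one (r p), ← Finsupp.smul_single']
  exact N.smul_mem _ (h r hr p hp)

variable (α : Q.A) (u : List Q.A) (I : Submodule k (List Q.A →₀ k))

def ReplacementClosed : Prop :=
  ∀ p₁ p₂ : List Q.A, α ∉ p₁ → α ∉ p₂ →
    Finsupp.single (p₁ ++ α :: p₂) (1 : k) ∈ I → Finsupp.single (p₁ ++ u ++ p₂) (1 : k) ∈ I

variable {α u I}

lemma replacementClosed_of_map_substMap_eq {τ : k} (hτ : τ ≠ 0)
    (hmap : Submodule.map (substMap Q k α u τ) I = I) : ReplacementClosed α u I := by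
  intro p₁ p₂ h₁ h₂ hp
  have himg : substMap Q k α u τ (Finsupp.single (p₁ ++ α :: p₂) 1) ∈ I :=
    hmap ▸ Submodule.mem_map_of_mem hp
  rw [substMap_single, substPoly_append_cons α u τ h₁ h₂] at himg
  have hτu : τ • Finsupp.single (p₁ ++ u ++ p₂) (1 : k) ∈ I := by
    simpa using I.sub_mem himg hp
  simpa [smul_smul, inv_mul_cancel₀ hτ] using I.smul_mem τ⁻¹ hτu

lemma substPoly_mem (hnc : Q.NoCycle) (hrepl : ReplacementClosed α u I) (τ : k)
    {p : List Q.A} (hp : Q.IsPath p) (hpI : Finsupp.single p (1 : k) ∈ I) :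
    substPoly Q k α u τ p ∈ I := by
  by_cases hα : α ∈ p
  · obtain ⟨p₁, p₂, rfl, h₁, h₂⟩ := hnc.exists_eq_append_cons hp hα
    rw [substPoly_append_cons α u τ h₁ h₂]
    exact I.add_mem hpI (I.smul_mem τ (hrepl p₁ p₂ h₁ h₂ hpI))
  · rwa [substPoly_of_notMem α u τ hα]

lemma single_mem_map_substMap (hnc : Q.NoCycle) (hαu : Q.IsBypass α u)
    (hrepl : ReplacementClosed α u I) (τ : k) {p : List Q.A} (hp : Q.IsPath p)
    (hpI : Finsupp.single p (1 : k) ∈ I) :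
    Finsupp.single p (1 : k) ∈ Submodule.map (substMap Q k α u τ) I := by
  have hfix : ∀ q, α ∉ q → Finsupp.single q (1 : k) ∈ I →
      Finsupp.single q (1 : k) ∈ Submodule.map (substMap Q k α u τ) I := fun q hq hqI =>
    ⟨_, hqI, by rw [substMap_single, substPoly_of_notMem α u τ hq]⟩
  by_cases hα : α ∈ p
  · obtain ⟨p₁, p₂, rfl, h₁, h₂⟩ := hnc.exists_eq_append_cons hp hα
    have hu : α ∉ p₁ ++ u ++ p₂ := by simp [h₁, h₂, hnc.notMem_of_isBypass hαu]
    have himg : Finsupp.single (p₁ ++ α :: p₂) 1 + τ • Finsupp.single (p₁ ++ u ++ p₂) 1 ∈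
        Submodule.map (substMap Q k α u τ) I :=
      ⟨_, hpI, by rw [substMap_single, substPoly_append_cons α u τ h₁ h₂]⟩
    simpa using Submodule.sub_mem _ himg
      (Submodule.smul_mem _ τ (hfix _ hu (hrepl p₁ p₂ h₁ h₂ hpI)))
  · exact hfix p hα hpI

lemma map_substMap_eq_of_replacementClosed (hnc : Q.NoCycle) (hαu : Q.IsBypass α u)
    (hI : IsMonomialAdmissible Q k I) (hrepl : ReplacementClosed α u I) (τ : k) :
    Submodule.map (substMap Q k α u τ) I = I := by
  apply le_antisymm
  · rw [Submodule.map_le_iff_le_comap]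
    refine le_of_forall_single_mem fun r hr p hp => ?_
    rw [Submodule.mem_comap, substMap_single]
    exact substPoly_mem hnc hrepl τ (hI.1 r hr p hp).1 (hI.2.2.1 r hr p hp)
  · exact le_of_forall_single_mem fun r hr p hp =>
      single_mem_map_substMap hnc hαu hrepl τ (hI.1 r hr p hp).1 (hI.2.2.1 r hr p hp)

end Ideal

theorem stmt_15_general (Q : Quiv)
    (k : Type) [Field k]
    (hnc : Q.NoCycle)
    (I₀ : Submodule k (List Q.A →₀ k)) (hI₀ : IsMonomialAdmissible Q k I₀)
    (α : Q.A) (u : List Q.A) (hαu : Q.IsBypass α u) :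
    Xor' (∀ τ : k, Submodule.map (substMap Q k α u τ) I₀ = I₀)
      (∀ τ : k, τ ≠ 0 → Submodule.map (substMap Q k α u τ) I₀ ≠ I₀) := by
  by_cases hrepl : ReplacementClosed α u I₀
  · have hfixed := map_substMap_eq_of_replacementClosed hnc hαu hI₀ hrepl
    exact Or.inl ⟨hfixed, fun hmoved => hmoved 1 one_ne_zero (hfixed 1)⟩
  · exact Or.inr ⟨fun τ hτ hmap => hrepl (replacementClosed_of_map_substMap_eq hτ hmap),
      fun hfixed => hrepl (replacementClosed_of_map_substMap_eq one_ne_zero (hfixed 1))⟩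

/-- Let `(α,u)` be a bypass in `Q`.  Then exactly one of the following
holds: either `φ_{α,u,τ}(I_0) = I_0` for every `τ ∈ k`, or `φ_{α,u,τ}(I_0) ≠ I_0`
for every `τ ∈ k^*`. -/
theorem stmt_15 (Q : Quiv) [Fintype Q.V] [Fintype Q.A]
    (k : Type) [Field k] [IsAlgClosed k]
    (hnc : Q.NoCycle) (hnm : Q.NoMultipleArrows)
    (I₀ : Submodule k (List Q.A →₀ k)) (hI₀ : IsMonomialAdmissible Q k I₀)
    (α : Q.A) (u : List Q.A) (hαu : Q.IsBypass α u) :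
    Xor' (∀ τ : k, Submodule.map (substMap Q k α u τ) I₀ = I₀)
      (∀ τ : k, τ ≠ 0 → Submodule.map (substMap Q k α u τ) I₀ ≠ I₀) :=
  stmt_15_general Q k hnc I₀ hI₀ α u hαu

end Quiv
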